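/- arXiv:2509.11581 — 3 statements merged into one kernel-verified Lean document; each statement's English description precedes it below -/
import Mathlib

section
/- If a graded poset P of length N+1 admits a recursive coatom ordering, then the poset P minus its unique maximal element is N-Cohen-Macaulay (in Görtz's recursive sense). -/
/-!
Let `x₁, …, x_t` be the recursive coatom ordering. The maximal elements of `P ∖ {1̂}` are the
coatoms `x_j`, each of length `N`. By property (2), every element of
`[0̂, x_j) ∩ ⋃_{i<j} [0̂, x_i)` lies below a coatom of `[0̂, x_j]` covered by some earlier `x_i`,
i.e. by (1) below one of the first few coatoms in the recursive ordering of `[0̂, x_j]`. These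
coatoms are then exactly the maximal elements of the intersection, with the same lower
intervals as in `[0̂, x_j]`. So the intersection is situated inside `[0̂, x_j]` just as
`P ∖ {1̂}` is inside `P`, except that only an initial segment of the coatom ordering is used,
and induction on the length applies.
-/

namespace PosetCM

variable {P : Type*}

/-- Covering relation inside a subset `S` of a poset (order given by `r`). -/
def covIn (r : P → P → Prop) (S : Set P) (x y : P) : Prop :=
  x ∈ S ∧ y ∈ S ∧ r x y ∧ x ≠ y ∧ ∀ z ∈ S, r x z → r z y → z = x ∨ z = y

/-- Top-to-bottom chains in `S` with consecutive coverings. -/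
def IsChainTD (r : P → P → Prop) (S : Set P) : List P → Prop
  | [] => False
  | [x] => x ∈ S
  | x :: y :: l => covIn r S y x ∧ IsChainTD r S (y :: l)

def IsMaxElem (r : P → P → Prop) (S : Set P) (x : P) : Prop :=
  x ∈ S ∧ ∀ y ∈ S, r x y → y = x

def IsMinElem (r : P → P → Prop) (S : Set P) (x : P) : Prop :=
  x ∈ S ∧ ∀ y ∈ S, r y x → y = x

/-- A maximal (saturated, inextensible) chain of the poset `S`. -/
def IsMaxChain (r : P → P → Prop) (S : Set P) (c : List P) : Prop :=
  IsChainTD r S c ∧ (∀ x ∈ c.head?, IsMaxElem r S x) ∧ (∀ x ∈ c.getLast?, IsMinElem r S x)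

/-- `S` is pure of length `n`: all maximal chains have `n` edges. -/
def PureLen (r : P → P → Prop) (S : Set P) (n : ℕ) : Prop :=
  (∃ c, IsMaxChain r S c) ∧ ∀ c, IsMaxChain r S c → c.length = n + 1

/-- Graded poset of length `n`: pure with unique minimum and unique maximum. -/
def Graded (r : P → P → Prop) (S : Set P) (n : ℕ) : Prop :=
  PureLen r S n ∧ (∃! m, IsMaxElem r S m) ∧ (∃! m, IsMinElem r S m)

/-- closed lower interval `[0̂, x]` inside `S`. -/
def intvl (r : P → P → Prop) (S : Set P) (x : P) : Set P := {z ∈ S | r z x}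

/-- half-open lower interval `[0̂, x)` inside `S`. -/
def intvlo (r : P → P → Prop) (S : Set P) (x : P) : Set P := {z ∈ S | r z x ∧ z ≠ x}

/-- Coatoms: elements covered by a maximal element. -/
def IsCoatom' (r : P → P → Prop) (S : Set P) (p : P) : Prop :=
  ∃ m, IsMaxElem r S m ∧ covIn r S p m

/-- `z` has length `n` in `S` (length of a maximal chain of `[0̂,z]`). -/
def elemLen (r : P → P → Prop) (S : Set P) (z : P) (n : ℕ) : Prop :=
  ∃ c, IsMaxChain r (intvl r S z) c ∧ c.length = n + 1

/-- `IsRCO r n S L`: the list `L` is a recursive coatom ordering of the graded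
poset `S` of length `n` (Björner–Wachs, Definition 3.1 of loc. cit.). -/
def IsRCO (r : P → P → Prop) : ℕ → Set P → List P → Prop
  | 0, _, _ => False
  | 1, S, L => PureLen r S 1 ∧ L.Nodup ∧ ∀ p, p ∈ L ↔ IsCoatom' r S p
  | (n+2), S, L => PureLen r S (n+2) ∧ L.Nodup ∧ (∀ p, p ∈ L ↔ IsCoatom' r S p) ∧
      (∀ j : Fin L.length, ∃ L' : List P,
        IsRCO r (n+1) (intvl r S (L.get j)) L' ∧
        ∃ m : ℕ, ∀ p ∈ L',
          ((∃ k : Fin L'.length, (k : ℕ) < m ∧ L'.get k = p) ↔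
            ∃ i : Fin L.length, (i : ℕ) < (j : ℕ) ∧ covIn r S p (L.get i))) ∧
      (∀ i j : Fin L.length, (i : ℕ) < (j : ℕ) →
        ∀ w ∈ S, r w (L.get i) → w ≠ L.get i → r w (L.get j) → w ≠ L.get j →
        ∃ (k : Fin L.length) (w' : P), (k : ℕ) < (j : ℕ) ∧ r w w' ∧
          covIn r S w' (L.get k) ∧ covIn r S w' (L.get j))

/-- `S` admits a recursive coatom ordering (as a graded poset of length `n`). -/
def AdmitsRCO (r : P → P → Prop) (n : ℕ) (S : Set P) : Prop :=
  ∃ L, IsRCO r n S L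

/-- Görtz's recursive notion of an `N`-Cohen-Macaulay (pure) poset. -/
def IsCM (r : P → P → Prop) : ℕ → Set P → Prop
  | 0, S => ∃ x, IsMaxElem r S x ∧ (∀ y, IsMaxElem r S y → y = x) ∧ elemLen r S x 0
  | (N+1), S =>
      (∃ x, IsMaxElem r S x ∧ (∀ y, IsMaxElem r S y → y = x) ∧ elemLen r S x (N+1)) ∨
      (∃ (k : ℕ) (x : Fin k → P), 2 ≤ k ∧ Function.Injective x ∧
        (∀ p, IsMaxElem r S p ↔ ∃ i, x i = p) ∧
        (∀ i, elemLen r S (x i) (N+1)) ∧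
        (∀ j : Fin k, 0 < (j : ℕ) →
          IsCM r N (intvlo r S (x j) ∩
            {z | ∃ i : Fin k, (i : ℕ) < (j : ℕ) ∧ z ∈ intvlo r S (x i)})))

end PosetCM

theorem List.mem_take_iff_exists_get {α : Type*} {l : List α} {m : ℕ} {a : α} :
    a ∈ l.take m ↔ ∃ k : Fin l.length, (k : ℕ) < m ∧ l.get k = a := by
  rw [List.mem_take_iff_getElem]
  constructor
  · rintro ⟨k, hk, rfl⟩
    exact ⟨⟨k, hk.trans_le (min_le_right _ _)⟩, hk.trans_le (min_le_left _ _), rfl⟩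
  · rintro ⟨k, hk, rfl⟩
    exact ⟨k, lt_min hk k.2, rfl⟩

namespace PosetCM

section Relation

variable {P : Type*} {r : P → P → Prop}

theorem IsRCO.pureLen : ∀ {n : ℕ} {S : Set P} {L : List P}, IsRCO r n S L → PureLen r S n
  | 1, _, _, h => h.1
  | _ + 2, _, _, h => h.1

theorem IsRCO.nodup : ∀ {n : ℕ} {S : Set P} {L : List P}, IsRCO r n S L → L.Nodup
  | 1, _, _, h => h.2.1
  | _ + 2, _, _, h => h.2.1

theorem IsRCO.mem_iff : ∀ {n : ℕ} {S : Set P} {L : List P}, IsRCO r n S L →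
    ∀ p, p ∈ L ↔ IsCoatom' r S p
  | 1, _, _, h => h.2.2
  | _ + 2, _, _, h => h.2.2.1

theorem IsCoatom'.mem {S : Set P} {p : P} (h : IsCoatom' r S p) : p ∈ S :=
  let ⟨_, _, hp⟩ := h
  hp.1

theorem intvlo_eq_of_intvl_eq {A T : Set P} {p : P} (h : intvl r A p = intvl r T p) :
    intvlo r A p = intvlo r T p := by
  ext z
  have hz := Set.ext_iff.1 h z
  simp only [intvl, intvlo, Set.mem_ofPred_eq] at hz ⊢
  tauto

theorem elemLen_congr {A T : Set P} {p : P} {n : ℕ} (h : intvl r A p = intvl r T p) :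
    elemLen r A p n ↔ elemLen r T p n := by
  rw [elemLen, elemLen, h]

end Relation

variable {P : Type*} [PartialOrder P] {S : Set P}

theorem covIn_of_covIn_intvl {p x y : P} (h : covIn (· ≤ ·) (intvl (· ≤ ·) S p) y x) :
    covIn (· ≤ ·) S y x :=
  ⟨h.1.1, h.2.1.1, h.2.2.1, h.2.2.2.1,
    fun z hz hyz hzx => h.2.2.2.2 z ⟨hz, hzx.trans h.2.1.2⟩ hyz hzx⟩

theorem covIn_intvl_iff {p x : P} :
    covIn (· ≤ ·) (intvl (· ≤ ·) S x) p x ↔ covIn (· ≤ ·) S p x :=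
  ⟨covIn_of_covIn_intvl,
    fun h => ⟨⟨h.1, h.2.2.1⟩, ⟨h.2.1, le_rfl⟩, h.2.2.1, h.2.2.2.1, fun z hz => h.2.2.2.2 z hz.1⟩⟩

theorem IsChainTD.of_intvl {p : P} : ∀ {c : List P},
    IsChainTD (· ≤ ·) (intvl (· ≤ ·) S p) c → IsChainTD (· ≤ ·) S c
  | [], h => h.elim
  | [_], h => h.1
  | _ :: _ :: _, h => ⟨covIn_of_covIn_intvl h.1, IsChainTD.of_intvl h.2⟩

theorem isLeast_intvl {b x : P} (hb : IsLeast S b) (hx : x ∈ S) :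
    IsLeast (intvl (· ≤ ·) S x) b :=
  ⟨⟨hb.1, hb.2 hx⟩, fun _ hz => hb.2 hz.1⟩

theorem isGreatest_intvl {x : P} (hx : x ∈ S) : IsGreatest (intvl (· ≤ ·) S x) x :=
  ⟨⟨hx, le_rfl⟩, fun _ hz => hz.2⟩

theorem isMaxElem_of_isGreatest {t : P} (ht : IsGreatest S t) : IsMaxElem (· ≤ ·) S t :=
  ⟨ht.1, fun _ hy hty => le_antisymm (ht.2 hy) hty⟩

theorem isCoatom'_iff_covIn {p t : P} (ht : IsGreatest S t) :
    IsCoatom' (· ≤ ·) S p ↔ covIn (· ≤ ·) S p t := by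
  refine ⟨fun ⟨t', ht', hp⟩ => ?_,
    fun hp => ⟨t, isMaxElem_of_isGreatest ht, hp⟩⟩
  rwa [← ht'.2 t ht.1 (ht.2 ht'.1)] at hp

theorem covIn_of_isRCO_of_mem {n : ℕ} {L : List P} {p t : P} (ht : IsGreatest S t)
    (hL : IsRCO (· ≤ ·) n S L) (hp : p ∈ L) : covIn (· ≤ ·) S p t :=
  (isCoatom'_iff_covIn ht).1 ((hL.mem_iff p).1 hp)

theorem eq_of_covIn_of_le {p q t : P} (hp : covIn (· ≤ ·) S p t) (hq : covIn (· ≤ ·) S q t)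
    (hpq : p ≤ q) : p = q :=
  ((hp.2.2.2.2 q hq.1 hpq hq.2.2.1).resolve_right hq.2.2.2.1).symm

theorem not_isMaxElem_of_isLeast {n : ℕ} {b : P} (hS : PureLen (· ≤ ·) S (n + 1))
    (hb : IsLeast S b) : ¬ IsMaxElem (· ≤ ·) S b := fun hmax => by
  have hchain : IsMaxChain (· ≤ ·) S [b] :=
    ⟨hb.1, by simpa using hmax, by simpa using ⟨hb.1, fun y hy hyb => le_antisymm hyb (hb.2 hy)⟩⟩
  simpa using hS.2 _ hchain

theorem not_isCoatom'_of_isLeast {n : ℕ} {b : P} (hS : PureLen (· ≤ ·) S (n + 2))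
    (hb : IsLeast S b) : ¬ IsCoatom' (· ≤ ·) S b := fun ⟨t, ht, hbt⟩ => by
  have hchain : IsMaxChain (· ≤ ·) S [t, b] :=
    ⟨⟨hbt, hb.1⟩, by simpa using ht,
      by simpa using ⟨hb.1, fun y hy hyb => le_antisymm hyb (hb.2 hy)⟩⟩
  simpa using hS.2 _ hchain

theorem eq_of_elemLen_zero {p z : P} (hp : elemLen (· ≤ ·) S p 0) (hpS : p ∈ S) (hz : z ∈ S)
    (hzp : z ≤ p) : z = p := by
  obtain ⟨c, ⟨-, hhead, hlast⟩, hlen⟩ := hp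
  obtain ⟨x, rfl⟩ := List.length_eq_one_iff.1 hlen
  obtain rfl : p = x := (hhead x rfl).2 p ⟨hpS, le_rfl⟩ (hhead x rfl).1.2
  exact (hlast p rfl).2 z ⟨hz, hzp⟩ hzp

def overlap (S : Set P) (L : List P) (j : Fin L.length) : Set P :=
  intvlo (· ≤ ·) S (L.get j) ∩
    {z | ∃ i : Fin L.length, (i : ℕ) < j ∧ z ∈ intvlo (· ≤ ·) S (L.get i)}

theorem isCM_succ_of_list {n : ℕ} {Q : Set P} {W : List P} (hW : W.Nodup) (hne : W ≠ [])
    (hmax : ∀ p, IsMaxElem (· ≤ ·) Q p ↔ p ∈ W)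
    (hlen : ∀ p ∈ W, elemLen (· ≤ ·) Q p (n + 1))
    (hrec : ∀ j : Fin W.length, 0 < (j : ℕ) → IsCM (· ≤ ·) n (overlap Q W j)) :
    IsCM (· ≤ ·) (n + 1) Q := by
  by_cases h1 : W.length = 1
  · obtain ⟨x, rfl⟩ := List.length_eq_one_iff.1 h1
    exact Or.inl ⟨x, (hmax x).2 (by simp), fun y hy => by simpa using (hmax y).1 hy,
      hlen x (by simp)⟩
  · have h2 : 2 ≤ W.length := by have := List.length_pos_iff.2 hne; omega
    refine Or.inr ⟨W.length, W.get, h2, List.nodup_iff_injective_get.1 hW, fun p => ?_,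
      fun i => hlen _ (W.get_mem i), hrec⟩
    rw [hmax, List.mem_iff_get]

theorem overlap_eq_of_prefix {A T : Set P} {W L : List P} (hWL : W <+: L)
    (hint : ∀ p ∈ W, intvlo (· ≤ ·) A p = intvlo (· ≤ ·) T p) (j : Fin W.length) :
    overlap A W j = overlap T L (j.castLE hWL.length_le) := by
  have hint' : ∀ i : Fin W.length,
      intvlo (· ≤ ·) A (W.get i) = intvlo (· ≤ ·) T (L.get (i.castLE hWL.length_le)) :=
    fun i => (hint _ (W.get_mem i)).trans (congrArg _ (hWL.getElem i.2))
  ext z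
  simp only [overlap, Set.mem_inter_iff, Set.mem_ofPred_eq, hint']
  refine and_congr_right fun _ => ⟨fun ⟨i, hij, hz⟩ => ⟨i.castLE hWL.length_le, hij, hz⟩,
    fun ⟨i, hij, hz⟩ => ⟨⟨i, hij.trans j.2⟩, hij, hz⟩⟩

section Overlap

variable {n m : ℕ} {T : Set P} {L L' : List P} {j : Fin L.length}

theorem overlap_nonempty {b : P} (hb : IsLeast T b) (hL : IsRCO (· ≤ ·) (n + 2) T L)
    (hj : 0 < (j : ℕ)) : (overlap T L j).Nonempty := by
  have hbL : ∀ i, b ∈ intvlo (· ≤ ·) T (L.get i) := fun i => by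
    have hi := (hL.mem_iff _).1 (L.get_mem i)
    exact ⟨hb.1, hb.2 hi.mem, fun h => not_isCoatom'_of_isLeast hL.pureLen hb (h ▸ hi)⟩
  exact ⟨b, hbL j, ⟨0, hj.trans j.2⟩, hj, hbL _⟩

variable (hL : IsRCO (· ≤ ·) (n + 2) T L)
  (hL' : IsRCO (· ≤ ·) (n + 1) (intvl (· ≤ ·) T (L.get j)) L')
  (hm : ∀ p ∈ L', p ∈ L'.take m ↔
    ∃ i : Fin L.length, (i : ℕ) < j ∧ covIn (· ≤ ·) T p (L.get i))
include hL hL' hm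

/-- This is where property (2) of the recursive coatom ordering enters. -/
theorem exists_le_of_mem_overlap : ∀ z ∈ overlap T L j, ∃ p ∈ L'.take m, z ≤ p := by
  rintro z ⟨⟨hzT, hzx, hzx'⟩, i, hij, -, hzi, hzi'⟩
  obtain ⟨-, -, -, -, hlink⟩ := hL
  obtain ⟨k, w, hkj, hzw, hwk, hwx⟩ := hlink i j hij z hzT hzi hzi' hzx hzx'
  have hwL' : w ∈ L' := (hL'.mem_iff w).2
    ((isCoatom'_iff_covIn (isGreatest_intvl hwx.2.1)).2 (covIn_intvl_iff.2 hwx))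
  exact ⟨w, (hm w hwL').2 ⟨k, hkj, hwk⟩, hzw⟩

theorem intvl_overlap_eq : ∀ p ∈ L'.take m,
    intvl (· ≤ ·) (overlap T L j) p = intvl (· ≤ ·) (intvl (· ≤ ·) T (L.get j)) p := by
  intro p hp
  have hpL' := List.mem_of_mem_take hp
  obtain ⟨i, hij, hpi⟩ := (hm p hpL').1 hp
  have hx : L.get j ∈ T := ((hL.mem_iff _).1 (L.get_mem j)).mem
  have hpx : covIn (· ≤ ·) T p (L.get j) :=
    covIn_intvl_iff.1 (covIn_of_isRCO_of_mem (isGreatest_intvl hx) hL' hpL')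
  ext z
  constructor
  · rintro ⟨⟨⟨hzT, -⟩, -⟩, hzp⟩
    exact ⟨⟨hzT, hzp.trans hpx.2.2.1⟩, hzp⟩
  · rintro ⟨⟨hzT, -⟩, hzp⟩
    refine ⟨⟨⟨hzT, hzp.trans hpx.2.2.1, ?_⟩, i, hij, hzT, hzp.trans hpi.2.2.1, ?_⟩, hzp⟩
    · rintro rfl
      exact hpx.2.2.2.1 (le_antisymm hpx.2.2.1 hzp)
    · rintro rfl
      exact hpi.2.2.2.1 (le_antisymm hpi.2.2.1 hzp)

end Overlap

section Prefix

variable {n : ℕ} {T A : Set P} {L W : List P} {t : P} (ht : IsGreatest T t)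
  (hWL : W <+: L) (hcover : ∀ z ∈ A, ∃ p ∈ W, z ≤ p)
  (hint : ∀ p ∈ W, intvl (· ≤ ·) A p = intvl (· ≤ ·) T p)
include ht hWL hcover hint

theorem isMaxElem_iff_mem_of_prefix (hL : IsRCO (· ≤ ·) n T L) (p : P) :
    IsMaxElem (· ≤ ·) A p ↔ p ∈ W := by
  have hcov : ∀ p ∈ W, covIn (· ≤ ·) T p t := fun p hp =>
    covIn_of_isRCO_of_mem ht hL (hWL.subset hp)
  have hmemA : ∀ p ∈ W, p ∈ A := fun p hp => by
    have hpp : p ∈ intvl (· ≤ ·) A p := by rw [hint p hp]; exact ⟨(hcov p hp).1, le_rfl⟩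
    exact hpp.1
  constructor
  · intro hp
    obtain ⟨q, hq, hpq⟩ := hcover p hp.1
    rwa [hp.2 q (hmemA q hq) hpq] at hq
  · intro hp
    refine ⟨hmemA p hp, fun z hz hpz => ?_⟩
    obtain ⟨q, hq, hzq⟩ := hcover z hz
    obtain rfl := eq_of_covIn_of_le (hcov p hp) (hcov q hq) (hpz.trans hzq)
    exact le_antisymm hzq hpz

end Prefix

section Finite

variable [Finite P]

theorem exists_le_covIn {y z : P} (hy : y ∈ S) (hz : z ∈ S) (hyz : y < z) :
    ∃ w, y ≤ w ∧ covIn (· ≤ ·) S w z := by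
  obtain ⟨w, hyw, hw⟩ := Finite.exists_le_maximal (p := fun w => w ∈ S ∧ w < z) ⟨hy, hyz⟩
  refine ⟨w, hyw, hw.1.1, hz, hw.1.2.le, hw.1.2.ne, fun u hu hwu huz => ?_⟩
  rcases huz.lt_or_eq with huz | rfl
  · exact Or.inl (le_antisymm (hw.2 ⟨hu, huz⟩ hwu) hwu)
  · exact Or.inr rfl

theorem exists_isChainTD_to_isMinElem {z : P} (hz : z ∈ S) :
    ∃ c, IsChainTD (· ≤ ·) S (z :: c) ∧ ∀ x ∈ (z :: c).getLast?, IsMinElem (· ≤ ·) S x := by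
  induction z using WellFoundedLT.induction with
  | _ z ih =>
  by_cases hmin : IsMinElem (· ≤ ·) S z
  · exact ⟨[], hz, by simpa using hmin⟩
  obtain ⟨y, hy, hyz, hne⟩ : ∃ y ∈ S, y ≤ z ∧ y ≠ z := by
    by_contra! h
    exact hmin ⟨hz, h⟩
  obtain ⟨w, -, hwz⟩ := exists_le_covIn hy hz (lt_of_le_of_ne hyz hne)
  obtain ⟨c, hc, hlast⟩ := ih w (lt_of_le_of_ne hwz.2.2.1 hwz.2.2.2.1) hwz.1
  exact ⟨w :: c, ⟨hwz, hc⟩, by rwa [List.getLast?_cons_cons]⟩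

/-- Prepending `t` to a maximal chain of `[0̂, p]` gives a maximal chain of `S`. -/
theorem elemLen_of_covIn {n : ℕ} {p t : P} (hS : PureLen (· ≤ ·) S (n + 1))
    (ht : IsMaxElem (· ≤ ·) S t) (hpt : covIn (· ≤ ·) S p t) : elemLen (· ≤ ·) S p n := by
  obtain ⟨c, hc, hlast⟩ :=
    exists_isChainTD_to_isMinElem (S := intvl (· ≤ ·) S p) ⟨hpt.1, le_rfl⟩
  have hpmax : IsMaxElem (· ≤ ·) (intvl (· ≤ ·) S p) p :=
    ⟨⟨hpt.1, le_rfl⟩, fun y hy hpy => le_antisymm hy.2 hpy⟩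
  refine ⟨p :: c, ⟨hc, by simpa using hpmax, hlast⟩, ?_⟩
  have hlong : IsMaxChain (· ≤ ·) S (t :: p :: c) := by
    refine ⟨⟨hpt, hc.of_intvl⟩, by simpa using ht, ?_⟩
    rw [List.getLast?_cons_cons]
    intro x hx
    obtain ⟨⟨hxS, hxp⟩, hxmin⟩ := hlast x hx
    exact ⟨hxS, fun y hy hyx => hxmin y ⟨hy, hyx.trans hxp⟩ hyx⟩
  simpa using hS.2 _ hlong

theorem elemLen_of_isRCO_of_mem {n : ℕ} {L : List P} {p t : P} (ht : IsGreatest S t)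
    (hL : IsRCO (· ≤ ·) (n + 1) S L) (hp : p ∈ L) : elemLen (· ≤ ·) S p n :=
  elemLen_of_covIn hL.pureLen (isMaxElem_of_isGreatest ht) (covIn_of_isRCO_of_mem ht hL hp)

theorem isCM_of_isRCO_of_prefix {n : ℕ} {T A : Set P} {L W : List P} {b t : P}
    (hb : IsLeast T b) (ht : IsGreatest T t) (hL : IsRCO (· ≤ ·) (n + 1) T L) (hWL : W <+: L)
    (hA : A.Nonempty) (hcover : ∀ z ∈ A, ∃ p ∈ W, z ≤ p)
    (hint : ∀ p ∈ W, intvl (· ≤ ·) A p = intvl (· ≤ ·) T p) : IsCM (· ≤ ·) n A := by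
  have hmax := isMaxElem_iff_mem_of_prefix ht hWL hcover hint hL
  have hlen : ∀ p ∈ W, elemLen (· ≤ ·) A p n := fun p hp =>
    (elemLen_congr (hint p hp)).2 (elemLen_of_isRCO_of_mem ht hL (hWL.subset hp))
  obtain ⟨p₀, hp₀⟩ : ∃ p, p ∈ W :=
    let ⟨z, hz⟩ := hA
    let ⟨p, hp, _⟩ := hcover z hz
    ⟨p, hp⟩
  cases n with
  | zero =>
    have hbW : ∀ p ∈ W, b = p := fun p hp =>
      have hpT := ((hL.mem_iff p).1 (hWL.subset hp)).mem
      eq_of_elemLen_zero (elemLen_of_isRCO_of_mem ht hL (hWL.subset hp)) hpT hb.1 (hb.2 hpT)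
    refine ⟨p₀, (hmax p₀).2 hp₀, fun y hy => ?_, hlen p₀ hp₀⟩
    rw [← hbW y ((hmax y).1 hy), hbW p₀ hp₀]
  | succ n =>
    refine isCM_succ_of_list (hL.nodup.sublist hWL.sublist) (List.ne_nil_of_mem hp₀) hmax hlen
      fun j hj => ?_
    rw [overlap_eq_of_prefix hWL (fun p hp => intvlo_eq_of_intvl_eq (hint p hp))]
    set j' := j.castLE hWL.length_le
    obtain ⟨L', hL', m, hm⟩ := hL.2.2.2.1 j'
    have hm' : ∀ p ∈ L', p ∈ L'.take m ↔
        ∃ i : Fin L.length, (i : ℕ) < j' ∧ covIn (· ≤ ·) T p (L.get i) :=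
      fun p hp => List.mem_take_iff_exists_get.trans (hm p hp)
    have hx : L.get j' ∈ T := ((hL.mem_iff _).1 (L.get_mem j')).mem
    exact isCM_of_isRCO_of_prefix (isLeast_intvl hb hx) (isGreatest_intvl hx) hL'
      (L'.take_prefix m) (overlap_nonempty hb hL hj) (exists_le_of_mem_overlap hL hL' hm')
      (intvl_overlap_eq hL hL' hm')

theorem isLeast_univ_of_existsUnique {b : P} (h : ∃! b : P, IsMinElem (· ≤ ·) Set.univ b)
    (hb : IsMinElem (· ≤ ·) Set.univ b) : IsLeast Set.univ b := by
  refine ⟨trivial, fun z _ => ?_⟩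
  obtain ⟨y, hyz, hy⟩ := Finite.exists_le_minimal (p := fun _ : P => True) (a := z) trivial
  rwa [← h.unique ⟨trivial, fun w _ hwy => le_antisymm hwy (hy.2 trivial hwy)⟩ hb]

theorem isGreatest_univ_of_existsUnique {t : P} (h : ∃! t : P, IsMaxElem (· ≤ ·) Set.univ t)
    (ht : IsMaxElem (· ≤ ·) Set.univ t) : IsGreatest Set.univ t := by
  refine ⟨trivial, fun z _ => ?_⟩
  obtain ⟨y, hzy, hy⟩ := Finite.exists_le_maximal (p := fun _ : P => True) (a := z) trivial
  rwa [← h.unique ⟨trivial, fun w _ hyw => le_antisymm (hy.2 trivial hyw) hyw⟩ ht]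

end Finite

end PosetCM

open PosetCM

/-- If a graded poset `P` of length `N+1` admits a recursive
coatom ordering, then `P` minus its unique maximal element `m` is
`N`-Cohen-Macaulay. -/
theorem graded_rco_imp_CM {P : Type*} [PartialOrder P] [Fintype P] (N : ℕ)
    (hgraded : Graded (· ≤ ·) (Set.univ : Set P) (N + 1))
    (hrco : AdmitsRCO (· ≤ ·) (N + 1) (Set.univ : Set P)) :
    ∀ m : P, IsMaxElem (· ≤ ·) Set.univ m →
      IsCM (· ≤ ·) N ({m}ᶜ : Set P) := by
  intro m hm
  obtain ⟨hpure, hmax, hmin⟩ := hgraded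
  obtain ⟨b, hb⟩ := hmin.exists
  have hbot : IsLeast Set.univ b := isLeast_univ_of_existsUnique hmin hb
  have htop : IsGreatest Set.univ m := isGreatest_univ_of_existsUnique hmax hm
  obtain ⟨L, hL⟩ := hrco
  have hbm : b ≠ m := fun h => not_isMaxElem_of_isLeast hpure hbot (h ▸ hm)
  have hcover : ∀ z ∈ ({m}ᶜ : Set P), ∃ p ∈ L, z ≤ p := fun z hz => by
    obtain ⟨w, hzw, hwm⟩ :=
      exists_le_covIn (Set.mem_univ z) (Set.mem_univ m) ((htop.2 trivial).lt_of_ne hz)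
    exact ⟨w, (hL.mem_iff w).2 ((isCoatom'_iff_covIn htop).2 hwm), hzw⟩
  have hint : ∀ p ∈ L, intvl (· ≤ ·) {m}ᶜ p = intvl (· ≤ ·) Set.univ p := fun p hp => by
    have hpm : p < m :=
      (htop.2 trivial).lt_of_ne (covIn_of_isRCO_of_mem htop hL hp).2.2.2.1
    ext z
    exact ⟨fun hz => ⟨trivial, hz.2⟩, fun hz => ⟨(hz.2.trans_lt hpm).ne, hz.2⟩⟩
  exact isCM_of_isRCO_of_prefix hbot htop hL (List.prefix_refl L) ⟨b, hbm⟩ hcover hint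
end

section
/- Let w = x·t^λ·y be an element of the extended affine Weyl group with x, y ∈ W₀ and λ ∈ X_*. Then x·t^λ·y is an acute presentation of w (i.e., 𝟙[x(α)∈Φ⁻] + ⟨λ, α⟩ − 𝟙[y⁻¹(α)∈Φ⁻] ≥ 0 for all α ∈ Φ⁺) if and only if w lies in the acute cone C(𝔞, x) in the x-direction, i.e., w(𝔞) ⊆ H^{x+} for every root hyperplane H with 𝔞 ⊂ H^{x+}. -/
/-!
Axiomatized combinatorics of an extended affine Weyl group
`W̃ = X_* ⋊ W₀` of a based root datum.

* `Λ` is the coweight lattice `X_*`, `W` the finite Weyl group `W₀`,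
  `PR` the set of positive roots `Φ⁺`, `ι` the set of simple roots.
* A signed root is a pair `(b, α) : Bool × PR`, meaning `α` if `b = true`
  and `−α` if `b = false`; `rAct` is the action of `W₀` on signed roots.
* `act` is the action of `W₀` on `X_*` and `pair` the pairing `⟨λ, α⟩`.
* Elements of `W̃` are represented as pairs `(λ, z) : Λ × W`, standing for
  `t^λ·z`; the presentation `x·t^λ·y` represents the element `mk x λ y`.
-/

namespace AW

/-- Signed roots. -/
abbrev SR (PR : Type*) := Bool × PR

/-- Negation of a signed root. -/
def srneg {PR : Type*} (β : SR PR) : SR PR := (!β.1, β.2)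

structure Data (Λ W PR ι : Type*) [AddCommGroup Λ] [Group W] where
  rAct : W → SR PR → SR PR
  rAct_one : ∀ β, rAct 1 β = β
  rAct_mul : ∀ g h β, rAct (g * h) β = rAct g (rAct h β)
  rAct_neg : ∀ g β, rAct g (srneg β) = srneg (rAct g β)
  act : W → Λ → Λ
  act_one : ∀ l, act 1 l = l
  act_mul : ∀ g h l, act (g * h) l = act g (act h l)
  act_add : ∀ g l m, act g (l + m) = act g l + act g m
  pair : Λ → PR → ℤ
  pair_add : ∀ l m α, pair (l + m) α = pair l α + pair m α
  pair_equiv : ∀ (g : W) (l : Λ) (α : PR),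
    (if (rAct g (true, α)).1 then pair (act g l) (rAct g (true, α)).2
     else -pair (act g l) (rAct g (true, α)).2) = pair l α
  refl : PR → W
  refl_sq : ∀ α, refl α * refl α = 1
  refl_root : ∀ α, rAct (refl α) (true, α) = (false, α)
  coroot : PR → Λ
  simple : ι → PR
  simple_inj : Function.Injective simple

variable {Λ W PR ι : Type*} [AddCommGroup Λ] [Group W]

variable (D : Data Λ W PR ι)

/-- pairing with a signed root. -/
def pairSR (l : Λ) (β : SR PR) : ℤ := if β.1 then D.pair l β.2 else -D.pair l β.2

/-- `𝟙[z(α) ∈ Φ⁻]` (as an integer). -/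
def negInd (z : W) (α : PR) : ℤ := if (D.rAct z (true, α)).1 then 0 else 1

/-- `x·t^λ·y` is an acute presentation:
`𝟙[x(α)∈Φ⁻] + ⟨λ,α⟩ − 𝟙[y⁻¹(α)∈Φ⁻] ≥ 0` for all `α ∈ Φ⁺`. -/
def Acute (x : W) (l : Λ) (y : W) : Prop :=
  ∀ α : PR, 0 ≤ negInd D x α + D.pair l α - negInd D y⁻¹ α

/-- `λ` is dominant. -/
def Dominant (l : Λ) : Prop := ∀ α : PR, 0 ≤ D.pair l α

/-- the element `x·t^λ·y` of `W̃ = X_* ⋊ W₀`, as a pair `(coweight, finite part)`. -/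
def mk (x : W) (l : Λ) (y : W) : Λ × W := (D.act x l, x * y)

/-- multiplication in `W̃`. -/
def emul (a b : Λ × W) : Λ × W := (a.1 + D.act a.2 b.1, a.2 * b.2)

/-- the translation element `t^λ`. -/
def tr (l : Λ) : Λ × W := (l, 1)

section Fin
variable [Fintype PR]

/-- length of `z ∈ W₀`: `#{α ∈ Φ⁺ | z(α) ∈ Φ⁻}`. -/
def len0 (z : W) : ℤ := ∑ α : PR, negInd D z α

/-- `⟨λ, 2ρ⟩ = ∑_{α ∈ Φ⁺} ⟨λ, α⟩`. -/
def pair2rho (l : Λ) : ℤ := ∑ α : PR, D.pair l α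

/-- length of the element `x·t^λ·y` of `W̃` (the number of affine root
hyperplanes separating `x t^λ y (𝔞)` from `𝔞`). -/
def lenW (x : W) (l : Λ) (y : W) : ℤ :=
  ∑ α : PR, |negInd D x α + D.pair l α - negInd D y⁻¹ α|

/-- `⟨α∨, 2ρ⟩` for a positive root `α`. -/
def h2 (α : PR) : ℤ := pair2rho D (D.coroot α)

/-- Bruhat edge `z → z·s_α` of the quantum Bruhat graph. -/
def BruhatE (z : W) (α : PR) : Prop := len0 D (z * D.refl α) = len0 D z + 1

/-- Quantum edge `z → z·s_α` of the quantum Bruhat graph. -/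
def QuantumE (z : W) (α : PR) : Prop := len0 D (z * D.refl α) + h2 D α = len0 D z + 1

/-- One step of the Bruhat order on `W₀`. -/
def bstep0 (u v : W) : Prop := ∃ α, v = u * D.refl α ∧ len0 D u < len0 D v

/-- the Bruhat order on the finite Weyl group `W₀`. -/
def ble0 : W → W → Prop := Relation.ReflTransGen (bstep0 D)

end Fin

section Weights
variable [Fintype ι]

/-- `∑ i, c i · α_i∨` for `c : ι → ℕ`. -/
def csum (c : ι → ℕ) : Λ := ∑ i, (c i : ℤ) • D.coroot (D.simple i)

/-- `ν ≤ ν'` in the dominance order: `ν' − ν` is a nonnegative integral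
combination of simple coroots. -/
def wle (ν ν' : Λ) : Prop := ∃ c : ι → ℕ, ν' = ν + csum D c

/-- paths in the quantum Bruhat graph on `W₀` and their weights (in `Λ`). -/
inductive PathQ [Fintype PR] : W → W → ℕ → Λ → Prop
  | nil (w : W) : PathQ w w 0 0
  | bruhat {v : W} {d : ℕ} {γ : Λ} (u : W) (α : PR) :
      BruhatE D u α → PathQ (u * D.refl α) v d γ → PathQ u v (d + 1) γ
  | quantum {v : W} {d : ℕ} {γ : Λ} (u : W) (α : PR) :
      QuantumE D u α → PathQ (u * D.refl α) v d γ →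
      PathQ u v (d + 1) (D.coroot α + γ)

/-- `wt` is the weight function of the quantum Bruhat graph of `W₀`, recorded
in simple coroot coordinates: `csum D (wt u v)` is the weight of a shortest
path from `u` to `v`, and any path has weight `≥` it. -/
def WtSpec [Fintype PR] (wt : W → W → ι → ℕ) : Prop :=
  (∀ u v : W, ∃ d, PathQ D u v d (csum D (wt u v)) ∧
      ∀ d' γ, PathQ D u v d' γ → d ≤ d') ∧
  (∀ (u v : W) (d : ℕ) (γ : Λ), PathQ D u v d γ → wle D (csum D (wt u v)) γ)

/-- Schremmer's characterization of the Bruhat order `ble` on `W̃`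
(Theorem 4.2 of [Sch24]; cited as known in the paper): if `x t^λ y` is an
acute presentation of `w`, then `w ≤ w'` iff `w'` admits a presentation
`x' t^{λ'} y'` with `wt(x,x') + wt(y'⁻¹, y⁻¹) ≤ λ' − λ`. -/
def SchremmerSpec [Fintype PR] (ble : Λ × W → Λ × W → Prop)
    (wt : W → W → ι → ℕ) : Prop :=
  ∀ (x : W) (l : Λ) (y : W) (w' : Λ × W), Acute D x l y →
    (ble (mk D x l y) w' ↔
      ∃ (x' : W) (l' : Λ) (y' : W), w' = mk D x' l' y' ∧
        wle D (csum D (wt x x' + wt y'⁻¹ y⁻¹)) (l' - l))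

end Weights

/-- `w ∈ Adm(μ)`: `w ≤ t^{z(μ)}` for some `z ∈ W₀`. -/
def Adm (ble : Λ × W → Λ × W → Prop) (μ : Λ) : Set (Λ × W) :=
  {w | ∃ z : W, ble w (tr (D.act z μ))}

/-- covering in a partial order. -/
def cov {P : Type*} (r : P → P → Prop) (a b : P) : Prop :=
  r a b ∧ a ≠ b ∧ ∀ c, r a c → r c b → c = a ∨ c = b

end AW

namespace AW

variable {Λ W PR ι : Type*} [AddCommGroup Λ] [Group W] (D : Data Λ W PR ι)

/-- evaluation of a point `v` of the base alcove (recorded through its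
pairings `v α = ⟨v, α⟩ ∈ (0,1)` with the positive roots) on a signed root. -/
def evSR (v : PR → ℝ) (β : SR PR) : ℝ := if β.1 then v β.2 else -v β.2

/-- `v` represents a point of the base alcove
`𝔞 = {v | 0 < ⟨v,α⟩ < 1 for all α ∈ Φ⁺}`. -/
def InAlcove (v : PR → ℝ) : Prop := ∀ α : PR, 0 < v α ∧ v α < 1

/-- pairing `⟨w(v), δ⟩` for `w = x·t^λ·y`:
`⟨x(λ) + x y (v), δ⟩ = ⟨λ, x⁻¹(δ)⟩ + ⟨v, (x y)⁻¹(δ)⟩`. -/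
def wEval (x : W) (l : Λ) (y : W) (v : PR → ℝ) (δ : SR PR) : ℝ :=
  (pairSR D l (D.rAct x⁻¹ δ) : ℝ) + evSR v (D.rAct (x * y)⁻¹ δ)

/-- `w = x·t^λ·y` lies in the acute cone `C(𝔞, x)` in the `x`-direction:
for every root hyperplane `H = H_{(x(γ),k)}` (`γ ∈ Φ⁺`, `k ∈ ℤ`, so that
`H^{x+} = {v | ⟨v, x(γ)⟩ > -k}`) with `𝔞 ⊂ H^{x+}`, also `w(𝔞) ⊆ H^{x+}`. -/
def InAcuteCone (x : W) (l : Λ) (y : W) : Prop :=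
  ∀ (γ : PR) (k : ℤ),
    (∀ v, InAlcove v → -(k : ℝ) < evSR v (D.rAct x (true, γ))) →
    (∀ v, InAlcove v → -(k : ℝ) < wEval D x l y v (D.rAct x (true, γ)))

end AW

open AW

/-- `x·t^λ·y` is an acute presentation of `w = x t^λ y`
(i.e. `𝟙[x(α)∈Φ⁻] + ⟨λ,α⟩ − 𝟙[y⁻¹(α)∈Φ⁻] ≥ 0` for all `α ∈ Φ⁺`) if and only
if `w` lies in the acute cone `C(𝔞, x)` in the `x`-direction. -/
theorem acute_iff_inAcuteCone {Λ W PR ι : Type*} [AddCommGroup Λ] [Group W]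
    [Fintype PR] (D : AW.Data Λ W PR ι) (x : W) (l : Λ) (y : W) :
    Acute D x l y ↔ InAcuteCone D x l y := by
  have hinv : ∀ (g : W) (β : SR PR), D.rAct g⁻¹ (D.rAct g β) = β := fun g β => by
    rw [← D.rAct_mul, inv_mul_cancel, D.rAct_one]
  have hw : ∀ γ v, wEval D x l y v (D.rAct x (true, γ)) =
      (D.pair l γ : ℝ) + evSR v (D.rAct y⁻¹ (true, γ)) := by
    intro γ v
    unfold wEval
    rw [hinv, mul_inv_rev, D.rAct_mul, hinv]
    simp [pairSR]
  have hhalf : InAlcove (fun _ : PR => (1/2 : ℝ)) := fun α => by norm_num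
  have key : ∀ a b : ℤ, (a : ℝ) < (b : ℝ) + 1/2 → a ≤ b := by
    intro a b h
    by_contra hh
    push_neg at hh
    have : (b : ℝ) + 1 ≤ a := by exact_mod_cast hh
    linarith
  have key2 : ∀ a b : ℤ, (a : ℝ) < (b : ℝ) - 1/2 → a + 1 ≤ b := by
    intro a b h
    by_contra hh
    push_neg at hh
    have : (b : ℝ) ≤ a := by exact_mod_cast Int.lt_add_one_iff.mp hh
    linarith
  constructor
  · intro hA γ k hk
    have h1 := hk _ hhalf
    intro v hvv
    rw [hw]
    have hAg := hA γ
    have hβ := hvv ((D.rAct y⁻¹ (true, γ)).2)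
    unfold negInd at hAg
    unfold evSR at h1 ⊢
    rcases hb : (D.rAct x (true, γ)).1 <;> rcases hc : (D.rAct y⁻¹ (true, γ)).1 <;>
      simp only [hb, hc] at h1 hAg ⊢ <;> norm_num at h1 hAg ⊢
    · -- b = false, c = false : h1 : -k < -1/2
      have hk0 : -k + 1 ≤ 0 := key2 _ _ (by push_cast; linarith)
      have h2 : (-k : ℝ) ≤ D.pair l γ - 1 := by
        exact_mod_cast (by omega : -k ≤ D.pair l γ - 1)
      linarith [hβ.2]
    · -- b = false, c = true
      have hk0 : -k + 1 ≤ 0 := key2 _ _ (by push_cast; linarith)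
      have h2 : (-k : ℝ) ≤ D.pair l γ := by
        exact_mod_cast (by omega : -k ≤ D.pair l γ)
      linarith [hβ.1]
    · -- b = true, c = false : h1 : -k < 1/2
      have hk0 : -k ≤ 0 := key _ _ (by push_cast; linarith)
      have h2 : (-k : ℝ) ≤ D.pair l γ - 1 := by
        exact_mod_cast (by omega : -k ≤ D.pair l γ - 1)
      linarith [hβ.2]
    · -- b = true, c = true
      have hk0 : -k ≤ 0 := key _ _ (by push_cast; linarith)
      have h2 : (-k : ℝ) ≤ D.pair l γ := by exact_mod_cast (by omega : -k ≤ D.pair l γ)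
      linarith [hβ.1]
  · intro hC γ
    have hk : ∀ v, InAlcove v →
        -((negInd D x γ : ℤ) : ℝ) < evSR v (D.rAct x (true, γ)) := by
      intro v hv
      have := hv ((D.rAct x (true, γ)).2)
      unfold negInd evSR
      split_ifs <;> push_cast <;> linarith [this.1, this.2]
    have h2 := hC γ _ hk _ hhalf
    rw [hw] at h2
    unfold negInd at h2 ⊢
    unfold evSR at h2
    rcases hb : (D.rAct x (true, γ)).1 <;> rcases hc : (D.rAct y⁻¹ (true, γ)).1 <;>
      simp only [hb, hc] at h2 ⊢ <;> norm_num at h2 ⊢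
    · have := key2 (-1) (D.pair l γ) (by push_cast at h2 ⊢; linarith)
      omega
    · have := key (-1) (D.pair l γ) (by push_cast at h2 ⊢; linarith)
      omega
    · have := key2 0 (D.pair l γ) (by push_cast at h2 ⊢; linarith)
      omega
    · have := key 0 (D.pair l γ) (by push_cast at h2 ⊢; linarith)
      omega
end

section
/- For w = x·t^λ·y in the extended affine Weyl group with x, y ∈ W₀, λ ∈ X_*, one has ℓ(w) ≥ ℓ(x) + ⟨λ, 2ρ⟩ − ℓ(y), with equality if and only if x·t^λ·y is an acute presentation of w. -/
open AW

/-- For `w = x·t^λ·y` in the extended affine Weyl group,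
`ℓ(w) ≥ ℓ(x) + ⟨λ, 2ρ⟩ − ℓ(y)`, with equality if and only if `x·t^λ·y` is an
acute presentation of `w`.  Here `ℓ(w) = ∑_{α∈Φ⁺} |𝟙[x(α)∈Φ⁻] + ⟨λ,α⟩ −
𝟙[y⁻¹(α)∈Φ⁻]|` (the number of separating affine hyperplanes), and we use
`ℓ(y) = ℓ(y⁻¹) = #{α ∈ Φ⁺ | y⁻¹(α) ∈ Φ⁻}`. -/
theorem lenW_ge_and_acute_iff {Λ W PR ι : Type*} [AddCommGroup Λ] [Group W]
    [Fintype PR] (D : AW.Data Λ W PR ι) (x : W) (l : Λ) (y : W) :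
    len0 D x + pair2rho D l - len0 D y⁻¹ ≤ lenW D x l y ∧
    (lenW D x l y = len0 D x + pair2rho D l - len0 D y⁻¹ ↔ Acute D x l y) := by
  have hsum : len0 D x + pair2rho D l - len0 D y⁻¹ =
      ∑ α : PR, (negInd D x α + D.pair l α - negInd D y⁻¹ α) := by
    simp [len0, pair2rho, Finset.sum_add_distrib, Finset.sum_sub_distrib]
  constructor
  · rw [hsum, lenW]
    exact Finset.sum_le_sum fun α _ => le_abs_self _
  · rw [hsum, lenW]
    constructor
    · intro h α
      have := (Finset.sum_eq_sum_iff_of_le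
        (fun α (_ : α ∈ Finset.univ) => le_abs_self
          (negInd D x α + D.pair l α - negInd D y⁻¹ α))).mp h.symm α (Finset.mem_univ α)
      exact abs_nonneg _ |>.trans this.ge
    · intro h
      exact Finset.sum_congr rfl fun α _ => abs_of_nonneg (h α)
end
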